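/- Let m ≥ 1 be an integer, β > 0, μ ∈ ℝ^m, and Σ a symmetric positive definite m×m real matrix, and let X be distributed according to the MGGD(μ, Σ, β) density. Then for every natural number k ≥ 0, E[((X−μ)ᵀ Σ^{−1} (X−μ))^{βk}] = 2^k Γ(m/(2β) + k) / Γ(m/(2β)); in particular, E[((X−μ)ᵀ Σ^{−1} (X−μ))^{β}] = m/β. -/

import Mathlib

/-
Centring at `μ` and substituting `x = μ + Σ^{1/2} y` turns the quadratic form `Q` into `‖y‖²` at
the cost of the Jacobian `√(det Σ)`. Polar coordinates, with sphere area `2 π^{m/2} / Γ(m/2)`, reduce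
`E[Q^{βt}]` to `∫₀^∞ r^{m-1} r^{2βt} e^{-r^{2β}/2} dr`, which the substitution `u = r^{2β}/2` turns
into `2^{m/(2β)+t} Γ(m/(2β)+t) / (2β)`. The normalising constant cancels everything but
`2^t Γ(m/(2β)+t) / Γ(m/(2β))`, and `Γ(a+1) = a Γ(a)` gives `m/β` at `t = 1`.
-/

open MeasureTheory Matrix Real

noncomputable def mggdDensity (m : ℕ) (μ : Fin m → ℝ) (S : Matrix (Fin m) (Fin m) ℝ)
    (β : ℝ) (x : Fin m → ℝ) : ℝ :=
  β * Real.Gamma ((m : ℝ) / 2) /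
      (Real.pi ^ ((m : ℝ) / 2) * Real.Gamma ((m : ℝ) / (2 * β)) *
        (2 : ℝ) ^ ((m : ℝ) / (2 * β)) * Real.sqrt S.det) *
    Real.exp (-(1 / 2) * ((x - μ) ⬝ᵥ (S⁻¹ *ᵥ (x - μ))) ^ β)

section

variable {ι : Type*} [Fintype ι] {E : Type*} [NormedAddCommGroup E] [NormedSpace ℝ E]

theorem integral_comp_dotProduct_self [Nonempty ι] (g : ℝ → E) :
    ∫ y : ι → ℝ, g (y ⬝ᵥ y) =
      (2 * π ^ ((Fintype.card ι : ℝ) / 2) / Gamma ((Fintype.card ι : ℝ) / 2)) •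
        ∫ r in Set.Ioi (0 : ℝ), r ^ (Fintype.card ι - 1) • g (r ^ 2) := by
  have hnorm (v : EuclideanSpace ℝ ι) : v.ofLp ⬝ᵥ v.ofLp = ‖v‖ ^ 2 := by
    rw [EuclideanSpace.real_norm_sq_eq]
    simp [dotProduct, sq]
  have hball : volume.real (Metric.ball (0 : EuclideanSpace ℝ ι) 1) =
      π ^ ((Fintype.card ι : ℝ) / 2) / Gamma ((Fintype.card ι : ℝ) / 2 + 1) := by
    rw [measureReal_def, EuclideanSpace.volume_ball, ENNReal.ofReal_one, one_pow, one_mul,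
      ENNReal.toReal_ofReal (by positivity), sqrt_eq_rpow, ← rpow_mul_natCast pi_pos.le,
      one_div_mul_eq_div]
  rw [← (EuclideanSpace.volume_preserving_symm_measurableEquiv_toLp ι).integral_comp']
  simp_rw [MeasurableEquiv.coe_toLp_symm, hnorm]
  rw [integral_fun_norm_addHaar volume (fun r => g (r ^ 2)), finrank_euclideanSpace, hball,
    ← Nat.cast_smul_eq_nsmul ℝ, smul_smul]
  congr 1
  have hn : (Fintype.card ι : ℝ) / 2 ≠ 0 := by positivity
  rw [Gamma_add_one hn]
  field_simp

variable [DecidableEq ι]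

theorem integral_eq_abs_det_smul_integral_comp_mulVec {B : Matrix ι ι ℝ} (hB : B.det ≠ 0)
    (g : (ι → ℝ) → E) :
    ∫ x, g x = |B.det| • ∫ y, g (B *ᵥ y) := by
  let e : (ι → ℝ) ≃ᵐ (ι → ℝ) :=
    (B.toLinearEquiv' (B.invertibleOfIsUnitDet hB.isUnit)).toContinuousLinearEquiv
      |>.toHomeomorph.toMeasurableEquiv
  have hmap : Measure.map e volume = ENNReal.ofReal |B.det|⁻¹ • volume := by
    rw [← abs_inv, ← Real.map_matrix_volume_pi_eq_smul_volume_pi hB]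
    rfl
  change _ = _ • ∫ y, g (e y)
  rw [← integral_map_equiv e, hmap, integral_smul_measure,
    ENNReal.toReal_ofReal (inv_nonneg.mpr (abs_nonneg _)), smul_inv_smul₀ (abs_ne_zero.mpr hB)]

open scoped MatrixOrder in
theorem Matrix.PosDef.exists_abs_det_eq_sqrt_det_and_dotProduct_inv_mulVec
    {S : Matrix ι ι ℝ} (hS : S.PosDef) :
    ∃ B : Matrix ι ι ℝ, |B.det| = √S.det ∧
      ∀ y, (B *ᵥ y) ⬝ᵥ (S⁻¹ *ᵥ (B *ᵥ y)) = y ⬝ᵥ y := by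
  set B := CFC.sqrt S
  have hdet : B.det = √S.det := by simp [B, hS.posSemidef.det_sqrt]
  have hunit : IsUnit B.det := by
    rw [hdet]
    exact (Real.sqrt_pos.mpr hS.det_pos).ne'.isUnit
  have hsymm : Bᵀ = B := (CFC.sqrt_nonneg S).posSemidef.isHermitian
  have hinv : S⁻¹ = B⁻¹ * B⁻¹ := by
    rw [← mul_inv_rev, CFC.sqrt_mul_sqrt_self S hS.posSemidef.nonneg]
  refine ⟨B, by rw [hdet, abs_of_nonneg (Real.sqrt_nonneg _)], fun y => ?_⟩
  rw [hinv, mulVec_mulVec, mul_assoc, nonsing_inv_mul _ hunit, mul_one, dotProduct_mulVec,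
    ← mulVec_transpose, transpose_nonsing_inv, hsymm, mulVec_mulVec, nonsing_inv_mul _ hunit,
    one_mulVec]

theorem integral_comp_dotProduct_inv_mulVec_sub {S : Matrix ι ι ℝ} (hS : S.PosDef)
    (μ : ι → ℝ) (g : ℝ → E) :
    ∫ x, g ((x - μ) ⬝ᵥ (S⁻¹ *ᵥ (x - μ))) = √S.det • ∫ y : ι → ℝ, g (y ⬝ᵥ y) := by
  obtain ⟨B, hdet, hquad⟩ := hS.exists_abs_det_eq_sqrt_det_and_dotProduct_inv_mulVec
  have hB : B.det ≠ 0 := abs_pos.mp (hdet ▸ Real.sqrt_pos.mpr hS.det_pos)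
  rw [integral_sub_right_eq_self (fun x : ι → ℝ => g (x ⬝ᵥ (S⁻¹ *ᵥ x))) μ,
    integral_eq_abs_det_smul_integral_comp_mulVec hB, hdet]
  simp_rw [hquad]

end

theorem integral_Ioi_rpow_sub_one_mul_exp_neg_half_rpow {s p : ℝ} (hs : 0 < s) (hp : 0 < p) :
    ∫ r in Set.Ioi (0 : ℝ), r ^ (s - 1) * exp (-(1 / 2) * r ^ p) =
      2 ^ (s / p) * Gamma (s / p) / p := by
  rw [integral_rpow_mul_exp_neg_mul_rpow hp (by linarith) one_half_pos, sub_add_cancel,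
    neg_div, one_div, inv_rpow zero_le_two, ← rpow_neg zero_le_two, neg_neg]
  ring

theorem integral_Ioi_pow_smul_sq_rpow_mul_exp_neg_half_sq_rpow {n : ℕ} (hn : n ≠ 0) {β t : ℝ}
    (hβ : 0 < β) (ht : -(n / (2 * β)) < t) :
    ∫ r in Set.Ioi (0 : ℝ), r ^ (n - 1) • ((r ^ 2) ^ (β * t) * exp (-(1 / 2) * (r ^ 2) ^ β)) =
      2 ^ (n / (2 * β) + t) * Gamma (n / (2 * β) + t) / (2 * β) := by
  have hst : (n + 2 * β * t) / (2 * β) = n / (2 * β) + t := by field_simp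
  have hs : 0 < n + 2 * β * t := by
    rw [← div_pos_iff_of_pos_right (by positivity : (0 : ℝ) < 2 * β), hst]
    linarith
  rw [← hst, ← integral_Ioi_rpow_sub_one_mul_exp_neg_half_rpow hs (by positivity)]
  refine setIntegral_congr_fun measurableSet_Ioi fun r (hr : 0 < r) => ?_
  rw [← rpow_natCast, ← rpow_natCast, ← rpow_mul hr.le, ← rpow_mul hr.le, smul_eq_mul,
    Nat.cast_sub (Nat.one_le_iff_ne_zero.mpr hn), Nat.cast_one,
    show n + 2 * β * t - 1 = (n - 1 : ℝ) + 2 * (β * t) by ring, rpow_add hr]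
  ring_nf

theorem integral_dotProduct_inv_mulVec_rpow_mul_mggdDensity {m : ℕ} (hm : m ≠ 0) {β : ℝ}
    (hβ : 0 < β) (μ : Fin m → ℝ) {S : Matrix (Fin m) (Fin m) ℝ} (hS : S.PosDef) {t : ℝ}
    (ht : -(m / (2 * β)) < t) :
    ∫ x : Fin m → ℝ, ((x - μ) ⬝ᵥ (S⁻¹ *ᵥ (x - μ))) ^ (β * t) * mggdDensity m μ S β x =
      2 ^ t * Gamma (m / (2 * β) + t) / Gamma (m / (2 * β)) := by
  have : NeZero m := ⟨hm⟩
  set c := β * Gamma (m / 2) /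
    (π ^ ((m : ℝ) / 2) * Gamma (m / (2 * β)) * 2 ^ ((m : ℝ) / (2 * β)) * √S.det)
  calc _ = c * ∫ x : Fin m → ℝ, ((x - μ) ⬝ᵥ (S⁻¹ *ᵥ (x - μ))) ^ (β * t) *
          exp (-(1 / 2) * ((x - μ) ⬝ᵥ (S⁻¹ *ᵥ (x - μ))) ^ β) := by
        rw [← integral_const_mul]
        congr 1 with x
        rw [mggdDensity]
        ring
    _ = c * (√S.det * (2 * π ^ ((m : ℝ) / 2) / Gamma (m / 2) *
          (2 ^ (m / (2 * β) + t) * Gamma (m / (2 * β) + t) / (2 * β)))) := by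
        rw [integral_comp_dotProduct_inv_mulVec_sub hS μ
          (fun u => u ^ (β * t) * exp (-(1 / 2) * u ^ β)), integral_comp_dotProduct_self
          (fun u => u ^ (β * t) * exp (-(1 / 2) * u ^ β)), Fintype.card_fin,
          integral_Ioi_pow_smul_sq_rpow_mul_exp_neg_half_sq_rpow hm hβ ht, smul_eq_mul,
          smul_eq_mul]
    _ = _ := by
        have : 0 < Gamma (m / (2 * β)) := Gamma_pos_of_pos (by positivity)
        have : 0 < Gamma (m / 2) := Gamma_pos_of_pos (by positivity)
        have : 0 < √S.det := Real.sqrt_pos.mpr hS.det_pos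
        rw [rpow_add two_pos]
        simp only [c]
        field_simp

/-- if `X ~ MGGD(μ, Σ, β)` then for every natural `k ≥ 0`,
`E[((X−μ)ᵀ Σ⁻¹ (X−μ))^{βk}] = 2^k Γ(m/(2β) + k) / Γ(m/(2β))`; in particular
`E[((X−μ)ᵀ Σ⁻¹ (X−μ))^β] = m/β`. -/
theorem mggd_radial_moments
    (m : ℕ) (hm : 1 ≤ m) (β : ℝ) (hβ : 0 < β)
    (μ : Fin m → ℝ) (S : Matrix (Fin m) (Fin m) ℝ) (hS : S.PosDef) :
    (∀ k : ℕ,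
      ∫ x : Fin m → ℝ,
          ((x - μ) ⬝ᵥ (S⁻¹ *ᵥ (x - μ))) ^ (β * k) * mggdDensity m μ S β x
        = 2 ^ k * Real.Gamma ((m : ℝ) / (2 * β) + k) / Real.Gamma ((m : ℝ) / (2 * β))) ∧
    (∫ x : Fin m → ℝ,
        ((x - μ) ⬝ᵥ (S⁻¹ *ᵥ (x - μ))) ^ β * mggdDensity m μ S β x = m / β) := by
  have hm0 : m ≠ 0 := Nat.one_le_iff_ne_zero.mp hm
  have ha : 0 < (m : ℝ) / (2 * β) := by positivity
  have moment (t : ℝ) (ht : 0 ≤ t) :=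
    integral_dotProduct_inv_mulVec_rpow_mul_mggdDensity hm0 hβ μ hS (t := t) (by linarith)
  refine ⟨fun k => by rw [moment k k.cast_nonneg, rpow_natCast], ?_⟩
  have moment_one := moment 1 zero_le_one
  rw [mul_one, rpow_one, Gamma_add_one ha.ne'] at moment_one
  rw [moment_one]
  field_simp
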